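/- (Polygonal Section Bootstrap) Let Q be a convex polyhedron with a polygonal section P. If P is locally Rupert, then Q is locally Rupert. -/

import Mathlib

open Matrix

/-- Rotation by angle `θ` about the unit axis `a` (Rodrigues' formula). -/
noncomputable def rot3 (a : Fin 3 → ℝ) (θ : ℝ) (x : Fin 3 → ℝ) : Fin 3 → ℝ :=
  Real.cos θ • x + Real.sin θ • (crossProduct a x) + ((1 - Real.cos θ) * (a ⬝ᵥ x)) • a

/-- Orthogonal projection onto the xy-plane, viewed as a map to `ℝ²`. -/
def proj2 (x : Fin 3 → ℝ) : Fin 2 → ℝ := ![x 0, x 1]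

/-- Orthogonal projection `(x,y,z) ↦ (x,y,0)` of `ℝ³` onto the xy-plane. -/
def proj3 (x : Fin 3 → ℝ) : Fin 3 → ℝ := ![x 0, x 1, 0]

/-- `X ⊆ ℝ³` is locally Rupert: Rupert rotations of arbitrarily small angle exist. -/
noncomputable def IsLocallyRupert (X : Set (Fin 3 → ℝ)) : Prop :=
  ∀ ε > 0, ∃ (a : Fin 3 → ℝ) (θ : ℝ), a ⬝ᵥ a = 1 ∧ |θ| < ε ∧
    proj2 '' (rot3 a θ '' X) ⊆ interior (proj2 '' X)

/-- `X ⊆ ℝ³` is locally reverse Rupert. -/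
noncomputable def IsLocallyReverseRupert (X : Set (Fin 3 → ℝ)) : Prop :=
  ∀ ε > 0, ∃ (a : Fin 3 → ℝ) (θ : ℝ), a ⬝ᵥ a = 1 ∧ |θ| < ε ∧
    proj2 '' X ⊆ interior (proj2 '' (rot3 a θ '' X))

/-! Connectedness of segments and the section condition show that `Q` casts the same shadow
`S = π(P)` as `P`, and that every vertex of `Q` off the plane `z = 0` projects into the
interior of `S`. As `Q` is the convex hull of its finitely many vertices, some `c > 0` makes
the closed ball of radius `c |z(q)|` about `π(q)` lie in `S` for every `q ∈ Q`. For a rotation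
`R` by a small angle `θ`, the vertical line through `R q` meets `R {z = 0}` in a point `R p`
with `|π(p) - π(q)| ≤ 4 |θ| |z(q)|`; hence `p ∈ P`, and `π(R q) = π(R p)` lies in the interior
of `S` whenever `R` is Rupert for `P`. -/

open Set Metric Filter Topology Pointwise Real

theorem IsPreconnected.inter_frontier_nonempty {X : Type*} [TopologicalSpace X] {s t : Set X}
    (hs : IsPreconnected s) (hst : (s ∩ t).Nonempty) (hst' : (s \ t).Nonempty) :
    (s ∩ frontier t).Nonempty := by
  by_contra! h
  have hcover : s ⊆ interior t ∪ (closure t)ᶜ := fun x hx => by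
    by_cases hxi : x ∈ interior t
    · exact Or.inl hxi
    · exact Or.inr fun hxc => (eq_empty_iff_forall_notMem.1 h) x ⟨hx, hxc, hxi⟩
  have hin : (s ∩ interior t).Nonempty := by
    obtain ⟨x, hxs, hxt⟩ := hst
    exact ⟨x, hxs, (hcover hxs).resolve_right (not_not.2 (subset_closure hxt))⟩
  have hout : (s ∩ (closure t)ᶜ).Nonempty := by
    obtain ⟨x, hxs, hxt⟩ := hst'
    exact ⟨x, hxs, (hcover hxs).resolve_left fun hxi => hxt (interior_subset hxi)⟩
  obtain ⟨x, -, hxi, hxc⟩ := hs _ _ isOpen_interior isClosed_closure.isOpen_compl hcover hin hout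
  exact hxc (subset_closure (interior_subset hxi))

theorem Convex.convex_setOf_closedBall_subset {E F : Type*} [AddCommGroup E] [Module ℝ E]
    [NormedAddCommGroup F] [NormedSpace ℝ F] [ProperSpace F] {S : Set F} (hS : Convex ℝ S)
    (f : E →ₗ[ℝ] F) {φ : E → ℝ} (hφ : ConvexOn ℝ univ φ) (hφ0 : ∀ x, 0 ≤ φ x) :
    Convex ℝ {x | closedBall (f x) (φ x) ⊆ S} := by
  intro x hx y hy a b ha hb hab
  calc closedBall (f (a • x + b • y)) (φ (a • x + b • y))
      ⊆ closedBall (a • f x + b • f y) (a * φ x + b * φ y) := by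
        rw [map_add, map_smul, map_smul]
        exact closedBall_subset_closedBall (hφ.2 trivial trivial ha hb hab)
    _ = a • closedBall (f x) (φ x) + b • closedBall (f y) (φ y) := by
        rw [smul_closedBall _ _ (hφ0 x), smul_closedBall _ _ (hφ0 y), Real.norm_of_nonneg ha,
          Real.norm_of_nonneg hb,
          closedBall_add_closedBall (mul_nonneg ha (hφ0 x)) (mul_nonneg hb (hφ0 y))]
    _ ⊆ a • S + b • S := add_subset_add (smul_set_mono hx) (smul_set_mono hy)
    _ ⊆ S := convex_iff_pointwise_add_subset.1 hS ha hb hab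

lemma convexOn_mul_abs_apply {ι : Type*} (i : ι) {c : ℝ} (hc : 0 ≤ c) :
    ConvexOn ℝ univ (fun x : ι → ℝ => c * |x i|) :=
  (convexOn_univ_norm.comp_linearMap (LinearMap.proj (R := ℝ) (φ := fun _ : ι => ℝ) i)).smul hc

lemma eq_left_of_mem_segment_of_map_eq_zero {E : Type*} [AddCommGroup E] [Module ℝ E]
    (f : E →ₗ[ℝ] ℝ) {p q x : E} (hx : x ∈ segment ℝ p q) (hp : f p = 0) (hq : f q ≠ 0)
    (hfx : f x = 0) : x = p := by
  obtain ⟨s, t, -, -, hst, rfl⟩ := hx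
  have ht : t = 0 := by simpa [hp, hq] using hfx
  obtain rfl : s = 1 := by linarith
  simp [ht]

lemma one_sub_cos_le_abs (θ : ℝ) : 1 - cos θ ≤ |θ| := by
  rcases le_total |θ| 2 with h | h
  · nlinarith [one_sub_sq_div_two_le_cos (x := θ), sq_abs θ, abs_nonneg θ]
  · linarith [neg_one_le_cos θ]

lemma abs_sin_mul_add_le {θ b c d : ℝ} (hb : |b| ≤ 1) (hc : |c| ≤ 1) (hd : |d| ≤ 1) :
    |sin θ * b + (1 - cos θ) * c * d| ≤ 2 * |θ| :=
  calc |sin θ * b + (1 - cos θ) * c * d| ≤ |sin θ| * |b| + (1 - cos θ) * (|c| * |d|) := by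
        refine (abs_add_le _ _).trans_eq ?_
        rw [abs_mul, mul_assoc, abs_mul, abs_of_nonneg (sub_nonneg.2 (cos_le_one θ)), abs_mul]
    _ ≤ |θ| * 1 + |θ| * (1 * 1) := by
        gcongr ?_ * ?_ + ?_ * (?_ * ?_)
        exacts [abs_sin_le_abs, one_sub_cos_le_abs θ]
    _ = 2 * |θ| := by ring

lemma abs_apply_le_one_of_dotProduct_self {n : ℕ} {a : Fin n → ℝ} (ha : a ⬝ᵥ a = 1)
    (i : Fin n) : |a i| ≤ 1 := by
  rw [← sq_le_one_iff_abs_le_one, sq, ← ha]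
  exact Finset.single_le_sum (f := fun j => a j * a j) (fun j _ => mul_self_nonneg (a j))
    (Finset.mem_univ i)

def proj2ₗ : (Fin 3 → ℝ) →ₗ[ℝ] Fin 2 → ℝ where
  toFun := proj2
  map_add' x y := by ext i; fin_cases i <;> rfl
  map_smul' c x := by ext i; fin_cases i <;> rfl

lemma coe_proj2ₗ : ⇑proj2ₗ = proj2 := rfl

lemma continuous_proj2 : Continuous proj2 := proj2ₗ.continuous_of_finiteDimensional

lemma proj2_injOn : InjOn proj2 {x | x 2 = 0} := by
  intro x hx y hy h
  ext i
  fin_cases i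
  · exact congrFun h 0
  · exact congrFun h 1
  · exact hx.trans hy.symm

lemma rot3_sub_smul (a : Fin 3 → ℝ) (θ k : ℝ) (x u : Fin 3 → ℝ) :
    rot3 a θ (x - k • u) = rot3 a θ x - k • rot3 a θ u := by
  simp only [rot3, map_sub, map_smul, dotProduct_sub, dotProduct_smul, smul_eq_mul]
  module

lemma rot3_neg_e3_apply (a : Fin 3 → ℝ) (θ : ℝ) :
    rot3 a (-θ) ![0, 0, 1] = ![-(sin θ * a 1) + (1 - cos θ) * a 2 * a 0,
      sin θ * a 0 + (1 - cos θ) * a 2 * a 1, cos θ + (1 - cos θ) * a 2 * a 2] := by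
  ext i
  fin_cases i <;> simp [rot3, cross_apply, dotProduct, Fin.sum_univ_three]

lemma rot3_rot3_neg_e3 {a : Fin 3 → ℝ} (ha : a ⬝ᵥ a = 1) (θ : ℝ) :
    rot3 a θ (rot3 a (-θ) ![0, 0, 1]) = ![0, 0, 1] := by
  have hsc := sin_sq_add_cos_sq θ
  simp only [dotProduct, Fin.sum_univ_three] at ha
  rw [rot3_neg_e3_apply]
  ext i
  fin_cases i <;> simp only [rot3, Fin.isValue, smul_cons, smul_eq_mul, Matrix.smul_empty,
    cross_apply, cons_val, cons_val_one, cons_val_zero, add_cons, head_cons, tail_cons,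
    empty_add_empty, dotProduct, Fin.sum_univ_three, Fin.zero_eta, Fin.mk_one, Fin.reduceFinMk,
    Pi.add_apply, Pi.smul_apply]
  · linear_combination (-(a 2 * a 0)) * hsc + ((1 - cos θ) ^ 2 * (a 2 * a 0)) * ha
  · linear_combination (-(a 2 * a 1)) * hsc + ((1 - cos θ) ^ 2 * (a 2 * a 1)) * ha
  · linear_combination (1 - a 2 * a 2) * hsc +
      (sin θ ^ 2 + (1 - cos θ) ^ 2 * (a 2 * a 2)) * ha

lemma norm_proj2_rot3_neg_e3_le {a : Fin 3 → ℝ} (ha : a ⬝ᵥ a = 1) (θ : ℝ) :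
    ‖proj2 (rot3 a (-θ) ![0, 0, 1])‖ ≤ 2 * |θ| := by
  have h := abs_apply_le_one_of_dotProduct_self ha
  refine (pi_norm_le_iff_of_nonneg (by positivity)).2 fun i => ?_
  rw [rot3_neg_e3_apply, Real.norm_eq_abs]
  fin_cases i
  · simpa [proj2, neg_mul] using abs_sin_mul_add_le (θ := -θ) (h 1) (h 2) (h 0)
  · simpa [proj2] using abs_sin_mul_add_le (θ := θ) (h 0) (h 2) (h 1)

lemma half_le_rot3_neg_e3_two {a : Fin 3 → ℝ} {θ : ℝ} (hθ : |θ| ≤ 1) :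
    1 / 2 ≤ rot3 a (-θ) ![0, 0, 1] 2 := by
  rw [rot3_neg_e3_apply]
  simp only [cons_val_two, tail_cons, head_cons]
  have hθ2 : θ ^ 2 ≤ 1 := by rw [← sq_abs]; exact pow_le_one₀ (abs_nonneg θ) hθ
  have h := mul_nonneg (sub_nonneg.2 (cos_le_one θ)) (mul_self_nonneg (a 2))
  linarith [one_sub_sq_div_two_le_cos (x := θ)]

lemma exists_plane_proj2_rot3_eq {a : Fin 3 → ℝ} (ha : a ⬝ᵥ a = 1) {θ : ℝ} (hθ : |θ| ≤ 1)
    (q : Fin 3 → ℝ) : ∃ p : Fin 3 → ℝ, p 2 = 0 ∧ proj2 (rot3 a θ p) = proj2 (rot3 a θ q) ∧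
      dist (proj2 p) (proj2 q) ≤ 4 * |θ| * |q 2| := by
  set u := rot3 a (-θ) ![0, 0, 1]
  have hu2 : 1 / 2 ≤ u 2 := half_le_rot3_neg_e3_two hθ
  refine ⟨q - (q 2 / u 2) • u, ?_, ?_, ?_⟩
  · simp only [Pi.sub_apply, Pi.smul_apply, smul_eq_mul]
    field_simp
    ring
  · rw [rot3_sub_smul, rot3_rot3_neg_e3 ha]
    ext i; fin_cases i <;> simp [proj2]
  · have hk : ‖q 2 / u 2‖ ≤ 2 * |q 2| := by
      rw [Real.norm_eq_abs, abs_div, abs_of_pos (show 0 < u 2 by linarith),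
        div_le_iff₀ (by linarith)]
      nlinarith [abs_nonneg (q 2)]
    rw [dist_eq_norm, ← coe_proj2ₗ, map_sub, map_smul, sub_sub_cancel_left, norm_neg, norm_smul]
    calc ‖q 2 / u 2‖ * ‖proj2ₗ u‖ ≤ (2 * |q 2|) * (2 * |θ|) :=
          mul_le_mul hk (norm_proj2_rot3_neg_e3_le ha θ) (norm_nonneg _) (by positivity)
      _ = 4 * |θ| * |q 2| := by ring

section PolygonalSection

variable {Q P : Set (Fin 3 → ℝ)}

lemma mem_of_proj2_mem_image (hP : P ⊆ {x | x 2 = 0}) {p : Fin 3 → ℝ} (hp : p 2 = 0)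
    (h : proj2 p ∈ proj2 '' P) : p ∈ P :=
  (proj2_injOn.mem_image_iff hP hp).1 h

lemma proj2_notMem_frontier (hP : P ⊆ {x | x 2 = 0})
    (hsec : Q ∩ proj2 ⁻¹' frontier (proj2 '' P) = P ∩ proj2 ⁻¹' frontier (proj2 '' P))
    {q : Fin 3 → ℝ} (hq : q ∈ Q) (hq2 : q 2 ≠ 0) : proj2 q ∉ frontier (proj2 '' P) :=
  fun h => hq2 (hP (hsec.subset ⟨hq, h⟩).1)

lemma proj2_image_eq (hQ : Convex ℝ Q) (hP : P = Q ∩ {x | x 2 = 0})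
    (hPint : (interior (proj2 '' P)).Nonempty)
    (hsec : Q ∩ proj2 ⁻¹' frontier (proj2 '' P) = P ∩ proj2 ⁻¹' frontier (proj2 '' P)) :
    proj2 '' Q = proj2 '' P := by
  have hPQ : P ⊆ Q := hP ▸ inter_subset_left
  have hPz : P ⊆ {x | x 2 = 0} := hP ▸ inter_subset_right
  refine (image_mono hPQ).antisymm' ?_
  rintro _ ⟨q, hq, rfl⟩
  by_contra hqS
  have hq2 : q 2 ≠ 0 := fun hq2 => hqS ⟨q, hP ▸ ⟨hq, hq2⟩, rfl⟩
  obtain ⟨_, hpint⟩ := hPint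
  obtain ⟨p, hp, rfl⟩ := interior_subset hpint
  have hseg : IsPreconnected (proj2 '' segment ℝ p q) :=
    (convex_segment p q).isPreconnected.image proj2 continuous_proj2.continuousOn
  obtain ⟨_, ⟨x, hx, rfl⟩, hxfr⟩ := hseg.inter_frontier_nonempty
    ⟨proj2 p, mem_image_of_mem _ (left_mem_segment ℝ p q), interior_subset hpint⟩
    ⟨proj2 q, mem_image_of_mem _ (right_mem_segment ℝ p q), hqS⟩
  have hxQ : x ∈ Q := hQ.segment_subset (hPQ hp) hq hx
  have hx2 : x 2 = 0 := by_contra fun hx2 => proj2_notMem_frontier hPz hsec hxQ hx2 hxfr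
  obtain rfl := eq_left_of_mem_segment_of_map_eq_zero
    (LinearMap.proj (R := ℝ) (φ := fun _ : Fin 3 => ℝ) 2) hx (hPz hp) hq2 hx2
  exact disjoint_interior_frontier.le_bot ⟨hpint, hxfr⟩

lemma exists_pos_closedBall_subset (V : Finset (Fin 3 → ℝ))
    (hQ : Q = convexHull ℝ (V : Set (Fin 3 → ℝ))) (hP : P = Q ∩ {x | x 2 = 0})
    (hPint : (interior (proj2 '' P)).Nonempty)
    (hsec : Q ∩ proj2 ⁻¹' frontier (proj2 '' P) = P ∩ proj2 ⁻¹' frontier (proj2 '' P)) :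
    ∃ c > 0, ∀ q ∈ Q, closedBall (proj2 q) (c * |q 2|) ⊆ proj2 '' P := by
  have hQconv : Convex ℝ Q := hQ ▸ convex_convexHull ℝ _
  have himg := proj2_image_eq hQconv hP hPint hsec
  have hvert : ∀ v ∈ V, ∀ᶠ c in 𝓝 (0 : ℝ), closedBall (proj2 v) (c * |v 2|) ⊆ proj2 '' P := by
    intro v hv
    have hvQ : v ∈ Q := hQ ▸ subset_convexHull ℝ _ hv
    have hvS : proj2 v ∈ proj2 '' P := himg ▸ mem_image_of_mem _ hvQ
    by_cases hv2 : v 2 = 0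
    · simpa [hv2] using hvS
    have hvint : proj2 v ∈ interior (proj2 '' P) := by
      by_contra h
      exact proj2_notMem_frontier (hP ▸ inter_subset_right) hsec hvQ hv2
        ⟨subset_closure hvS, h⟩
    have hlim : Tendsto (fun c : ℝ => c * |v 2|) (𝓝 0) (𝓝 0) := by
      simpa using (tendsto_id (x := 𝓝 (0 : ℝ))).mul_const |v 2|
    exact hlim.eventually (eventually_closedBall_subset (mem_interior_iff_mem_nhds.1 hvint))
  obtain ⟨c, hcV, hc⟩ :=
    (((eventually_all_finset V).2 hvert).filter_mono nhdsWithin_le_nhds).and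
      (self_mem_nhdsWithin : Ioi (0 : ℝ) ∈ 𝓝[>] 0) |>.exists
  refine ⟨c, hc, hQ ▸ convexHull_min hcV ?_⟩
  exact (himg ▸ hQconv.linear_image proj2ₗ).convex_setOf_closedBall_subset proj2ₗ
    (convexOn_mul_abs_apply 2 hc.le) fun x => by positivity

end PolygonalSection

theorem polygonal_section_bootstrap_general (V : Finset (Fin 3 → ℝ))
    (Q P : Set (Fin 3 → ℝ))
    (hQ : Q = convexHull ℝ (V : Set (Fin 3 → ℝ)))
    (hP : P = Q ∩ {x | x 2 = 0})
    (hPint : (interior (proj2 '' P)).Nonempty)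
    (hsec : Q ∩ proj2 ⁻¹' (frontier (proj2 '' P))
          = P ∩ proj2 ⁻¹' (frontier (proj2 '' P)))
    (hPr : IsLocallyRupert P) :
    IsLocallyRupert Q := by
  have himg := proj2_image_eq (hQ ▸ convex_convexHull ℝ _) hP hPint hsec
  obtain ⟨c, hc, hball⟩ := exists_pos_closedBall_subset V hQ hP hPint hsec
  intro ε hε
  obtain ⟨a, θ, ha, hθ, hRup⟩ := hPr (min ε (min 1 (c / 4))) (by positivity)
  have hθ1 : |θ| ≤ 1 := hθ.le.trans ((min_le_right _ _).trans (min_le_left _ _))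
  have hθc : |θ| ≤ c / 4 := hθ.le.trans ((min_le_right _ _).trans (min_le_right _ _))
  refine ⟨a, θ, ha, hθ.trans_le (min_le_left _ _), ?_⟩
  rintro _ ⟨_, ⟨q, hq, rfl⟩, rfl⟩
  obtain ⟨p, hp2, hpq, hdist⟩ := exists_plane_proj2_rot3_eq ha hθ1 q
  have hpP : p ∈ P := by
    refine mem_of_proj2_mem_image (hP ▸ inter_subset_right) hp2 (hball q hq ?_)
    rw [mem_closedBall]
    exact hdist.trans (by gcongr; linarith)
  rw [← hpq, himg]
  exact hRup ⟨_, ⟨p, hpP, rfl⟩, rfl⟩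

/-- Polygonal Section Bootstrap: if `Q` has a polygonal section `P`
and `P` is locally Rupert, then `Q` is locally Rupert. -/
theorem polygonal_section_bootstrap (V : Finset (Fin 3 → ℝ))
    (Q P : Set (Fin 3 → ℝ))
    (hQ : Q = convexHull ℝ (V : Set (Fin 3 → ℝ)))
    (hext : ∀ v ∈ V, v ∈ Set.extremePoints ℝ Q)
    (hP : P = Q ∩ {x | x 2 = 0})
    (hPint : (interior (proj2 '' P)).Nonempty)
    (hsec : Q ∩ proj2 ⁻¹' (frontier (proj2 '' P))
          = P ∩ proj2 ⁻¹' (frontier (proj2 '' P)))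
    (hPr : IsLocallyRupert P) :
    IsLocallyRupert Q :=
  polygonal_section_bootstrap_general V Q P hQ hP hPint hsec hPr
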